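/- arXiv:1912.03928 — 9 statements merged into one kernel-verified Lean document; each statement's English description precedes it below -/
import Mathlib

section
/- Let G be a group and ⪯₁, ⪯₂ two left-invariant preorders on G such that neither refines the other. Then there exists u ∈ G such that u ≺₁ 1 and 1 ≺₂ u. -/
/-- A left-invariant preorder on a group `G`: a total, transitive, left-invariant
binary relation. -/
def IsLeftInvPreorder {G : Type*} [Group G] (r : G → G → Prop) : Prop :=
  (∀ u v, r u v ∨ r v u) ∧ (∀ u v w, r u v → r v w → r u w) ∧
    (∀ u v w, r u v → r (w * u) (w * v))

/-- The strict relation associated to a preorder: `u ≺ v` iff `u ⪯ v` and `¬ v ⪯ u`. -/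
def SLt {G : Type*} (r : G → G → Prop) (u v : G) : Prop :=
  r u v ∧ ¬ r v u

private lemma inv_mul_iff {G : Type*} [Group G] {r : G → G → Prop}
    (h : IsLeftInvPreorder r) (u v : G) : r u v ↔ r 1 (u⁻¹ * v) := by
  constructor
  · intro hr
    have := h.2.2 u v u⁻¹ hr
    simpa using this
  · intro hr
    have := h.2.2 1 (u⁻¹ * v) u hr
    simpa [mul_assoc] using this

theorem stmt2 {G : Type*} [Group G] (r₁ r₂ : G → G → Prop)
    (h₁ : IsLeftInvPreorder r₁) (h₂ : IsLeftInvPreorder r₂)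
    (h21 : ¬ ∀ u v, r₂ u v → r₁ u v) (h12 : ¬ ∀ u v, r₁ u v → r₂ u v) :
    ∃ u : G, SLt r₁ u 1 ∧ SLt r₂ 1 u := by
  push_neg at h21 h12
  obtain ⟨a, b, hab2, hab1⟩ := h21
  obtain ⟨c, d, hcd1, hcd2⟩ := h12
  set x := a⁻¹ * b with hx
  set y := c⁻¹ * d with hy
  have hx2 : r₂ 1 x := (inv_mul_iff h₂ a b).1 hab2
  have hx1 : ¬ r₁ 1 x := fun h => hab1 ((inv_mul_iff h₁ a b).2 h)
  have hy1 : r₁ 1 y := (inv_mul_iff h₁ c d).1 hcd1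
  have hy2 : ¬ r₂ 1 y := fun h => hcd2 ((inv_mul_iff h₂ c d).2 h)
  have hx1' : r₁ x 1 := (h₁.1 x 1).resolve_right hx1
  have hy2' : r₂ y 1 := (h₂.1 y 1).resolve_right hy2
  by_cases hc : r₂ x 1
  · -- use u = y⁻¹ * x
    refine ⟨y⁻¹ * x, ⟨?_, ?_⟩, ?_, ?_⟩
    · -- r₁ (y⁻¹ x) 1 : y⁻¹x ⪯₁ y⁻¹ ⪯₁ 1
      have h1 : r₁ (y⁻¹ * x) (y⁻¹ * 1) := h₁.2.2 x 1 y⁻¹ hx1'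
      have h2 : r₁ y⁻¹ 1 := by
        have := h₁.2.2 1 y y⁻¹ hy1; simpa using this
      simpa using h₁.2.1 _ _ _ h1 (by simpa using h2)
    · -- ¬ r₁ 1 (y⁻¹ x)
      intro h
      have h3 : r₁ y x := by
        have := h₁.2.2 1 (y⁻¹ * x) y h
        simpa [mul_assoc] using this
      exact hx1 (h₁.2.1 _ _ _ hy1 h3)
    · -- r₂ 1 (y⁻¹ x) : 1 ⪯₂ y⁻¹ ⪯₂ y⁻¹x
      have h1 : r₂ 1 y⁻¹ := by
        have := h₂.2.2 y 1 y⁻¹ hy2'; simpa using this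
      have h2 : r₂ (y⁻¹ * 1) (y⁻¹ * x) := h₂.2.2 1 x y⁻¹ hx2
      exact h₂.2.1 _ _ _ h1 (by simpa using h2)
    · -- ¬ r₂ (y⁻¹ x) 1
      intro h
      have h1 : r₂ y⁻¹ (y⁻¹ * x) := by
        have := h₂.2.2 1 x y⁻¹ hx2; simpa using this
      have h2 : r₂ y⁻¹ 1 := h₂.2.1 _ _ _ h1 h
      have h3 : r₂ 1 y := by
        have := h₂.2.2 y⁻¹ 1 y h2; simpa using this
      exact hy2 h3
  · exact ⟨x, ⟨hx1', hx1⟩, hx2, hc⟩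
end

section
/- Let G be a group and let ⪯, ⪯₁, ⪯₂ be left-invariant preorders on G such that ⪯ refines both ⪯₁ and ⪯₂. Then ⪯₁ refines ⪯₂ or ⪯₂ refines ⪯₁ (i.e., the set of left-invariant preorders refined by a fixed preorder is totally ordered under refinement). -/
theorem stmt3 {G : Type*} [Group G] (r r₁ r₂ : G → G → Prop)
    (h : IsLeftInvPreorder r) (h₁ : IsLeftInvPreorder r₁) (h₂ : IsLeftInvPreorder r₂)
    (hr1 : ∀ u v, r u v → r₁ u v) (hr2 : ∀ u v, r u v → r₂ u v) :
    (∀ u v, r₁ u v → r₂ u v) ∨ (∀ u v, r₂ u v → r₁ u v) := by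
  by_contra hc
  push_neg at hc
  obtain ⟨⟨u, v, huv, hnuv⟩, ⟨x, y, hxy, hnxy⟩⟩ := hc
  obtain ⟨ht, htr, hli⟩ := h
  obtain ⟨_, htr1, hli1⟩ := h₁
  obtain ⟨_, htr2, hli2⟩ := h₂
  set a := u⁻¹ * v with ha
  set b := x⁻¹ * y with hb
  have h1a : r₁ 1 a := by
    have := hli1 u v u⁻¹ huv
    simpa using this
  have h1b : r₂ 1 b := by
    have := hli2 x y x⁻¹ hxy
    simpa using this
  rcases ht a b with hab | hba
  · have : r₁ 1 b := htr1 1 a b h1a (hr1 a b hab)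
    have : r₁ x y := by simpa [hb, mul_inv_cancel_left] using hli1 1 b x this
    exact hnxy this
  · have : r₂ 1 a := htr2 1 b a h1b (hr2 b a hba)
    have : r₂ u v := by simpa [ha, mul_inv_cancel_left] using hli2 1 a u this
    exact hnuv this
end

section
/- Let G be a group and E a nonempty set of left-invariant preorders on G. Let S be the smallest submonoid of G containing the union over ⪯ ∈ E of the sets V_⪯ = {u | 1 ⪯ u}. Then: (a) for every u ∈ G, u ∈ S or u⁻¹ ∈ S; (b) the relation ⪯_S defined by u ⪯_S v ⟺ u⁻¹*v ∈ S is a left-invariant preorder on G; (c) for every left-invariant preorder ⪯' on G, ⪯_S refines ⪯' if and only if every element of E refines ⪯'. Hence the set of left-invariant preorders on G ordered by refinement is a join-semilattice in which every nonempty subset has an infimum. -/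
/-- The smallest submonoid of `G` containing the union of the sets
`V_⪯ = {u | 1 ⪯ u}` for `⪯ ∈ E`. -/
def infSubmonoid {G : Type*} [Group G] (E : Set (G → G → Prop)) : Submonoid G :=
  Submonoid.closure (⋃ r ∈ E, {u : G | r 1 u})

theorem stmt4 {G : Type*} [Group G] (E : Set (G → G → Prop)) (hE : E.Nonempty)
    (hall : ∀ r ∈ E, IsLeftInvPreorder r) :
    (∀ u : G, u ∈ infSubmonoid E ∨ u⁻¹ ∈ infSubmonoid E) ∧
    IsLeftInvPreorder (fun u v : G => u⁻¹ * v ∈ infSubmonoid E) ∧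
    (∀ r' : G → G → Prop, IsLeftInvPreorder r' →
      ((∀ u v : G, u⁻¹ * v ∈ infSubmonoid E → r' u v) ↔
        ∀ r ∈ E, ∀ u v, r u v → r' u v)) := by
  have hmem : ∀ r ∈ E, ∀ u : G, r 1 u → u ∈ infSubmonoid E := by
    intro r hr u hu
    exact Submonoid.subset_closure (Set.mem_biUnion hr hu)
  have htot : ∀ u : G, u ∈ infSubmonoid E ∨ u⁻¹ ∈ infSubmonoid E := by
    intro u
    obtain ⟨r, hr⟩ := hE
    obtain ⟨rtot, rtrans, rinv⟩ := hall r hr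
    rcases rtot 1 u with h | h
    · exact Or.inl (hmem r hr u h)
    · right
      apply hmem r hr
      have := rinv u 1 u⁻¹ h
      simpa using this
  refine ⟨htot, ⟨?_, ?_, ?_⟩, ?_⟩
  · intro u v
    rcases htot (u⁻¹ * v) with h | h
    · exact Or.inl h
    · right
      simpa using h
  · intro u v w h1 h2
    have := mul_mem h1 h2
    simpa [mul_assoc] using this
  · intro u v w h
    simpa [mul_assoc] using h
  · intro r' ⟨r'tot, r'trans, r'inv⟩
    have r'refl : ∀ u : G, r' u u := fun u => (r'tot u u).elim id id
    constructor
    · intro H r hr u v huv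
      obtain ⟨_, _, rinv⟩ := hall r hr
      apply H
      apply hmem r hr
      simpa using rinv u v u⁻¹ huv
    · intro H u v huv
      have key : ∀ s ∈ infSubmonoid E, r' 1 s := by
        intro s hs
        induction hs using Submonoid.closure_induction with
        | mem x hx =>
          obtain ⟨r, hr, hx⟩ := Set.mem_iUnion₂.mp hx
          exact H r hr 1 x hx
        | one => exact r'refl 1
        | mul a b _ _ ha hb =>
          exact r'trans 1 a (a * b) ha (by simpa using r'inv 1 b a hb)
      have := r'inv 1 (u⁻¹ * v) u (key _ huv)
      simpa using this
end

section
/- Let G be a group and ⪯₁, ⪯₂ two left-invariant preorders on G. Then ⪯₂ refines ⪯₁ if and only if ⪯₂ belongs to the closure of the singleton {⪯₁} in the Zariski topology on the set of left-invariant preorders on G. (The refinement order is the specialization order of the Zariski topology.) -/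
/-- The space of left-invariant preorders on `G`. -/
def ZRl (G : Type*) [Group G] : Type _ := {r : G → G → Prop // IsLeftInvPreorder r}

/-- The Zariski topology on `ZRl G`, generated by the sets `O_u = {⪯ | 1 ⪯ u}`. -/
def zariskiTop (G : Type*) [Group G] : TopologicalSpace (ZRl G) :=
  TopologicalSpace.generateFrom {s : Set (ZRl G) | ∃ u : G, s = {p : ZRl G | p.1 1 u}}

theorem TopologicalSpace.specializes_generateFrom_iff {α : Type*} {g : Set (Set α)} {x y : α} :
    @Specializes α (generateFrom g) x y ↔ ∀ s ∈ g, y ∈ s → x ∈ s := by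
  rw [@specializes_iff_pure _ (generateFrom g), ← Filter.tendsto_id', tendsto_nhds_generateFrom_iff]
  rfl

theorem rel_iff_one_rel_inv_mul_of_leftInvariant {G : Type*} [Group G] {r : G → G → Prop}
    (hr : ∀ u v w, r u v → r (w * u) (w * v)) (u v : G) : r u v ↔ r 1 (u⁻¹ * v) := by
  refine ⟨fun h => ?_, fun h => ?_⟩
  · simpa using hr u v u⁻¹ h
  · simpa using hr 1 (u⁻¹ * v) u h

theorem refines_iff_forall_one_rel_of_leftInvariant {G : Type*} [Group G] {r₁ r₂ : G → G → Prop}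
    (hr₁ : ∀ u v w, r₁ u v → r₁ (w * u) (w * v)) (hr₂ : ∀ u v w, r₂ u v → r₂ (w * u) (w * v)) :
    (∀ u v, r₂ u v → r₁ u v) ↔ ∀ u, r₂ 1 u → r₁ 1 u := by
  refine ⟨fun h u => h 1 u, fun h u v => ?_⟩
  rw [rel_iff_one_rel_inv_mul_of_leftInvariant hr₁, rel_iff_one_rel_inv_mul_of_leftInvariant hr₂]
  exact h _

theorem ZRl.mem_closure_singleton_iff {G : Type*} [Group G] (p q : ZRl G) :
    q ∈ @closure _ (zariskiTop G) {p} ↔ ∀ u, q.1 1 u → p.1 1 u := by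
  rw [← @specializes_iff_mem_closure _ (zariskiTop G), zariskiTop,
    TopologicalSpace.specializes_generateFrom_iff]
  constructor
  · exact fun h u => h _ ⟨u, rfl⟩
  · rintro h _ ⟨u, rfl⟩
    exact h u

theorem stmt5 {G : Type*} [Group G] (r₁ r₂ : G → G → Prop)
    (h₁ : IsLeftInvPreorder r₁) (h₂ : IsLeftInvPreorder r₂) :
    (∀ u v, r₂ u v → r₁ u v) ↔
      (⟨r₂, h₂⟩ : ZRl G) ∈ @closure (ZRl G) (zariskiTop G) {(⟨r₁, h₁⟩ : ZRl G)} := by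
  exact (refines_iff_forall_one_rel_of_leftInvariant h₁.2.2 h₂.2.2).trans
    (ZRl.mem_closure_singleton_iff ⟨r₁, h₁⟩ ⟨r₂, h₂⟩).symm
end

section
/- For every group G, the set of left-invariant preorders on G, endowed with the Patch topology, is a compact topological space. Consequently it is also compact for the Zariski topology and for the Inverse topology (which are coarser). -/
/-- The Inverse topology on `ZRl G`, generated by the sets `U_u = {⪯ | 1 ≺ u}`. -/
def invTop (G : Type*) [Group G] : TopologicalSpace (ZRl G) :=
  TopologicalSpace.generateFrom {s : Set (ZRl G) | ∃ u : G, s = {p : ZRl G | SLt p.1 1 u}}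

/-- The Patch topology on `ZRl G`, generated by the sets `O_u` and `U_u`. -/
def patchTop (G : Type*) [Group G] : TopologicalSpace (ZRl G) :=
  TopologicalSpace.generateFrom
    ({s : Set (ZRl G) | ∃ u : G, s = {p : ZRl G | p.1 1 u}} ∪
      {s : Set (ZRl G) | ∃ u : G, s = {p : ZRl G | SLt p.1 1 u}})


open Classical Set TopologicalSpace Topology

section aux

lemma isOpen_coordBool {ι : Type*} (u : ι) (b : Bool) :
    IsOpen {f : ι → Bool | f u = b} := by
  have : {f : ι → Bool | f u = b} = (fun f : ι → Bool => f u) ⁻¹' {b} := rfl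
  rw [this]
  exact (isOpen_discrete _).preimage (continuous_apply u)

lemma isClosed_coordBool {ι : Type*} (u : ι) (b : Bool) :
    IsClosed {f : ι → Bool | f u = b} := by
  have : {f : ι → Bool | f u = b} = (fun f : ι → Bool => f u) ⁻¹' {b} := rfl
  rw [this]
  exact (isClosed_discrete _).preimage (continuous_apply u)

lemma compactSpace_of_topLE {X : Type*} (t t' : TopologicalSpace X) (h : t ≤ t')
    (hc : @CompactSpace X t) : @CompactSpace X t' := by
  refine @CompactSpace.mk X t' ?_
  have := @IsCompact.image X X t t' Set.univ id (@isCompact_univ X t hc) (continuous_id_of_le h)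
  simpa using this

variable {G : Type*} [Group G]

noncomputable def phiZ (G : Type*) [Group G] : ZRl G → (G → Bool) :=
  fun p u => decide (p.1 1 u)

lemma phiZ_true {p : ZRl G} {u : G} : phiZ G p u = true ↔ p.1 1 u := by
  simp [phiZ]

lemma phiZ_false {p : ZRl G} {u : G} : phiZ G p u = false ↔ ¬ p.1 1 u := by
  simp [phiZ]

lemma linv_iff {p : ZRl G} (u v w : G) : p.1 u v ↔ p.1 (w * u) (w * v) := by
  refine ⟨fun h => p.2.2.2 _ _ _ h, fun h => ?_⟩
  have := p.2.2.2 _ _ w⁻¹ h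
  simpa using this

lemma inv_one_iff {p : ZRl G} (u : G) : p.1 1 u⁻¹ ↔ p.1 u 1 := by
  have := linv_iff (p := p) 1 u⁻¹ u
  simpa using this

lemma not_one_iff_slt {p : ZRl G} (u : G) :
    ¬ p.1 1 u ↔ SLt p.1 1 u⁻¹ := by
  have h1 : p.1 u⁻¹ 1 ↔ p.1 1 u := by
    have := linv_iff (p := p) u⁻¹ 1 u
    simpa using this
  constructor
  · intro h
    refine ⟨?_, by simpa [h1] using h⟩
    rcases p.2.1 1 u with h' | h'
    · exact absurd h' h
    · exact (inv_one_iff (p := p) u).2 h'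
  · intro ⟨_, h2⟩
    simpa [h1] using h2

lemma inducing_phiZ : @IsInducing _ _ (patchTop G) _ (phiZ G) := by
  letI := patchTop G
  constructor
  refine le_antisymm ?_ ?_
  · -- patchTop ≤ induced : φ is continuous
    rw [← continuous_iff_le_induced]
    refine continuous_pi fun u => ?_
    rw [continuous_discrete_rng]
    intro b
    cases b
    · have : (fun p => phiZ G p u) ⁻¹' {false} = {p : ZRl G | SLt p.1 1 u⁻¹} := by
        ext p; simp [phiZ_false, not_one_iff_slt]
      rw [this]
      exact isOpen_generateFrom_of_mem (Or.inr ⟨u⁻¹, rfl⟩)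
    · have : (fun p => phiZ G p u) ⁻¹' {true} = {p : ZRl G | p.1 1 u} := by
        ext p; simp [phiZ_true]
      rw [this]
      exact isOpen_generateFrom_of_mem (Or.inl ⟨u, rfl⟩)
  · -- induced ≤ patchTop : each generator is induced-open
    refine le_generateFrom ?_
    rintro s (⟨u, rfl⟩ | ⟨u, rfl⟩)
    · have : {p : ZRl G | p.1 1 u} = phiZ G ⁻¹' {f | f u = true} := by
        ext p; simp [phiZ_true]
      rw [this]
      exact isOpen_induced (isOpen_coordBool u true)
    · have : {p : ZRl G | SLt p.1 1 u} = phiZ G ⁻¹' ({f | f u = true} ∩ {f | f u⁻¹ = false}) := by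
        ext p
        have hu := inv_one_iff (p := p) u
        simp only [SLt, mem_setOf_eq, mem_preimage, mem_inter_iff, phiZ_true, phiZ_false]
        exact ⟨fun ⟨h1, h2⟩ => ⟨h1, fun h => h2 (hu.1 h)⟩,
          fun ⟨h1, h2⟩ => ⟨h1, fun h => h2 (hu.2 h)⟩⟩
      rw [this]
      exact isOpen_induced ((isOpen_coordBool u true).inter (isOpen_coordBool u⁻¹ false))

lemma range_phiZ_closed : IsClosed (range (phiZ G)) := by
  have hrange : range (phiZ G) =
      {f : G → Bool | f 1 = true} ∩
      (⋂ u : G, {f : G → Bool | f u = true} ∪ {f | f u⁻¹ = true}) ∩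
      (⋂ u : G, ⋂ v : G,
        {f : G → Bool | f u = false} ∪ {f | f v = false} ∪ {f | f (u * v) = true}) := by
    ext f
    simp only [mem_inter_iff, mem_iInter, mem_range, mem_union, mem_setOf_eq]
    constructor
    · rintro ⟨p, rfl⟩
      refine ⟨⟨?_, fun u => ?_⟩, fun u v => ?_⟩
      · rw [phiZ_true]
        rcases p.2.1 1 1 with h | h <;> exact h
      · rcases p.2.1 1 u with h | h
        · exact Or.inl (phiZ_true.2 h)
        · exact Or.inr (phiZ_true.2 ((inv_one_iff (p := p) u).2 h))
      · by_cases hu : p.1 1 u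
        · by_cases hv : p.1 1 v
          · refine Or.inr (phiZ_true.2 ?_)
            have h2 : p.1 u (u * v) := by
              have := linv_iff (p := p) 1 v u
              simpa using this.1 hv
            exact p.2.2.1 _ _ _ hu h2
          · exact Or.inl (Or.inr (phiZ_false.2 hv))
        · exact Or.inl (Or.inl (phiZ_false.2 hu))
    · rintro ⟨⟨h1, htot⟩, htrans⟩
      refine ⟨⟨fun u v => f (u⁻¹ * v) = true, ?_, ?_, ?_⟩, ?_⟩
      · intro u v
        rcases htot (u⁻¹ * v) with h | h
        · exact Or.inl h
        · simpa [mul_inv_rev] using Or.inr h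
      · intro u v w huv hvw
        rcases htrans (u⁻¹ * v) (v⁻¹ * w) with (h | h) | h
        · rw [huv] at h; exact absurd h (by simp)
        · rw [hvw] at h; exact absurd h (by simp)
        · simpa [mul_assoc] using h
      · intro u v w h
        simpa [mul_assoc] using h
      · funext u
        simp only [phiZ]
        rcases Bool.eq_false_or_eq_true (f u) with h | h
        · simp [h]
        · simp [h]
  rw [hrange]
  refine (IsClosed.inter ?_ ?_).inter ?_
  · exact isClosed_coordBool 1 true
  · exact isClosed_iInter fun u =>
      (isClosed_coordBool u true).union (isClosed_coordBool u⁻¹ true)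
  · exact isClosed_iInter fun u => isClosed_iInter fun v =>
      ((isClosed_coordBool u false).union (isClosed_coordBool v false)).union
        (isClosed_coordBool (u * v) true)

end aux

theorem stmt7 (G : Type*) [Group G] :
    @CompactSpace (ZRl G) (patchTop G) ∧
    @CompactSpace (ZRl G) (zariskiTop G) ∧
    @CompactSpace (ZRl G) (invTop G) := by

  have hpatch : @CompactSpace (ZRl G) (patchTop G) := by
    letI := patchTop G
    refine ⟨?_⟩
    rw [inducing_phiZ.isCompact_iff, image_univ]
    exact range_phiZ_closed.isCompact
  refine ⟨hpatch, ?_, ?_⟩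
  · exact compactSpace_of_topLE _ _ (generateFrom_anti subset_union_left) hpatch
  · exact compactSpace_of_topLE _ _ (generateFrom_anti subset_union_right) hpatch
end

section
/- Let G be a countable group. Then there exists a metric d on the set of left-invariant preorders on G satisfying the ultrametric inequality d(x, z) ≤ max(d(x, y), d(y, z)) for all x, y, z, and whose induced topology coincides with the Patch topology. -/
theorem stmt10 (G : Type*) [Group G] [Countable G] :
    ∃ m : MetricSpace (ZRl G),
      (∀ x y z : ZRl G, m.dist x z ≤ max (m.dist x y) (m.dist y z)) ∧
      m.toUniformSpace.toTopologicalSpace = patchTop G := by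
  classical
  -- basic facts about left-invariant preorders
  have key : ∀ p : ZRl G, ∀ u v : G, p.1 u v ↔ p.1 1 (u⁻¹ * v) := by
    intro p u v
    constructor
    · intro h
      simpa using p.2.2.2 u v u⁻¹ h
    · intro h
      have := p.2.2.2 1 (u⁻¹ * v) u h
      simpa [mul_assoc] using this
  have inv_iff : ∀ p : ZRl G, ∀ u : G, p.1 u 1 ↔ p.1 1 u⁻¹ := by
    intro p u
    simpa using key p u 1
  -- an injection of G into ℕ
  obtain ⟨enc, henc⟩ := Countable.exists_injective_nat G
  -- the embedding into ℕ → Bool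
  set e : ZRl G → (ℕ → Bool) := fun p n =>
    decide (∃ u : G, enc u = n ∧ p.1 1 u) with he
  have he_apply : ∀ p : ZRl G, ∀ u : G, e p (enc u) = true ↔ p.1 1 u := by
    intro p u
    simp only [he, decide_eq_true_eq]
    constructor
    · rintro ⟨v, hv, hpv⟩
      rwa [henc hv] at hpv
    · intro h; exact ⟨u, rfl, h⟩
  have einj : Function.Injective e := by
    intro p q hpq
    have h1 : ∀ u : G, p.1 1 u ↔ q.1 1 u := by
      intro u
      rw [← he_apply p u, ← he_apply q u, hpq]
    apply Subtype.ext
    funext u v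
    apply propext
    rw [key p u v, key q u v, h1]
  -- the metric space on ℕ → Bool (first-difference ultrametric)
  letI mBool : MetricSpace (ℕ → Bool) := PiNat.metricSpace
  refine ⟨MetricSpace.induced e einj mBool, ?_, ?_⟩
  · intro x y z
    exact PiNat.dist_triangle_nonarch (e x) (e y) (e z)
  · -- topology of induced metric = induced topology = patch topology
    have h1 : (MetricSpace.induced e einj mBool).toUniformSpace.toTopologicalSpace
        = TopologicalSpace.induced e mBool.toUniformSpace.toTopologicalSpace :=
      UniformSpace.toTopologicalSpace_comap
    rw [h1]
    have h2 : mBool.toUniformSpace.toTopologicalSpace = (Pi.topologicalSpace :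
        TopologicalSpace (ℕ → Bool)) := rfl
    rw [h2]
    -- now show induced e (Pi topology) = patchTop G
    apply le_antisymm
    · -- induced ≤ patchTop: each generator is induced-open
      apply le_generateFrom
      rintro s (⟨u, rfl⟩ | ⟨u, rfl⟩)
      · -- O_u = e⁻¹ {g | g (enc u) = true}
        have : {p : ZRl G | p.1 1 u} =
            e ⁻¹' ((fun g : ℕ → Bool => g (enc u)) ⁻¹' {x | x = true}) := by
          ext p; simpa using (he_apply p u).symm
        rw [this]
        exact isOpen_induced ((isOpen_discrete {x : Bool | x = true}).preimage
          (continuous_apply (enc u)))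
      · -- U_u = e⁻¹ ({g | g (enc u) = true} ∩ {g | g (enc u⁻¹) = false})
        have : {p : ZRl G | SLt p.1 1 u} =
            e ⁻¹' (((fun g : ℕ → Bool => g (enc u)) ⁻¹' {x | x = true}) ∩
              ((fun g : ℕ → Bool => g (enc u⁻¹)) ⁻¹' {x | x = false})) := by
          ext p
          simp only [Set.mem_setOf_eq, SLt, Set.mem_preimage, Set.mem_inter_iff]
          rw [inv_iff p u, ← he_apply p u, ← he_apply p u⁻¹]
          simp
        rw [this]
        exact isOpen_induced
          (((isOpen_discrete {x : Bool | x = true}).preimage (continuous_apply (enc u))).inter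
            ((isOpen_discrete {x : Bool | x = false}).preimage (continuous_apply (enc u⁻¹))))
    · -- patchTop ≤ induced: e is continuous from patchTop
      letI : TopologicalSpace (ZRl G) := patchTop G
      suffices hc : Continuous e by exact continuous_iff_le_induced.mp hc
      apply continuous_pi
      intro n
      -- the n-th coordinate of e
      by_cases hn : ∃ u : G, enc u = n
      · obtain ⟨u, rfl⟩ := hn
        -- coordinate map is p ↦ decide (p.1 1 u); continuous since preimages of
        -- true and false are patch-open
        have hfun : (fun p : ZRl G => e p (enc u)) = fun p => decide (p.1 1 u) := by
          funext p
          rcases Bool.eq_false_or_eq_true (e p (enc u)) with h | h <;>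
            rcases Bool.eq_false_or_eq_true (decide (p.1 1 u)) with h' | h' <;>
            simp_all [he_apply p u]
        rw [hfun]
        rw [continuous_discrete_rng]
        intro b
        cases b
        · -- preimage of false is {p | ¬ p.1 1 u} = U_{u⁻¹}
          have : {p : ZRl G | decide (p.1 1 u) = false} = {p : ZRl G | SLt p.1 1 u⁻¹} := by
            ext p
            simp only [Set.mem_setOf_eq, decide_eq_false_iff_not, SLt]
            constructor
            · intro h
              refine ⟨?_, fun h' => h ?_⟩
              · rcases p.2.1 1 u with h' | h'
                · exact absurd h' h
                · exact (inv_iff p u).mp h'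
              · have := (inv_iff p u⁻¹).mp h'
                simpa using this
            · rintro ⟨h1, h2⟩ h3
              exact h2 (by simpa using (inv_iff p u⁻¹).mpr (by simpa using h3))
          show IsOpen {p : ZRl G | decide (p.1 1 u) = false}
          rw [this]
          exact TopologicalSpace.isOpen_generateFrom_of_mem (Or.inr ⟨u⁻¹, rfl⟩)
        · have : {p : ZRl G | decide (p.1 1 u) = true} = {p : ZRl G | p.1 1 u} := by
            ext p; simp
          show IsOpen {p : ZRl G | decide (p.1 1 u) = true}
          rw [this]
          exact TopologicalSpace.isOpen_generateFrom_of_mem (Or.inl ⟨u, rfl⟩)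
      · -- coordinate is constantly false
        have hfun : (fun p : ZRl G => e p n) = fun _ => false := by
          funext p
          simp only [he, decide_eq_false_iff_not]
          rintro ⟨u, hu, -⟩
          exact hn ⟨u, hu⟩
        rw [hfun]
        exact continuous_const
end

section
/- Let n ≥ 1 and let φ be a ℚ-linear automorphism of ℚⁿ (i.e., of the vector space Fin n → ℚ). Then the following are equivalent: (i) for every translation-invariant total preorder ⪯ on ℚⁿ and all u, v ∈ ℚⁿ one has φ(u) ⪯ φ(v) if and only if u ⪯ v; (ii) there exists a rational number λ > 0 such that φ(x) = λ • x for all x ∈ ℚⁿ. -/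
/-!
If `l = p / q > 0`, then `0 ⪯ l • w ↔ 0 ⪯ q • l • w = p • w ↔ 0 ⪯ w`, since the nonnegative
cone `{w | 0 ⪯ w}` is an additive submonoid whose union with its negative is everything; so positive
homotheties preserve every translation-invariant total preorder. Conversely, every linear
functional `f` gives the preorder `f u ≤ f v`; preserving all of them forces `φ` to map each
kernel of a functional into itself, hence each vector into its own span, so `φ` is a homothety,
and the factor is positive because `φ` preserves the sign of `f`.
-/

/-- A translation-invariant total preorder on an additive group: a total, transitive
relation invariant under translation. -/
def IsTransInvPreorder {M : Type*} [AddGroup M] (r : M → M → Prop) : Prop :=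
  (∀ u v, r u v ∨ r v u) ∧ (∀ u v w, r u v → r v w → r u w) ∧
    (∀ u v w, r u v → r (u + w) (v + w))

namespace IsTransInvPreorder

section AddGroup

variable {M : Type*} [AddGroup M] {r : M → M → Prop}

theorem refl (hr : IsTransInvPreorder r) (u : M) : r u u :=
  (hr.1 u u).elim id id

theorem iff_zero_sub (hr : IsTransInvPreorder r) {u v : M} : r u v ↔ r 0 (v - u) :=
  ⟨fun h => by simpa [sub_eq_add_neg] using hr.2.2 u v (-u) h,
    fun h => by simpa using hr.2.2 0 (v - u) u h⟩

def nonnegCone (hr : IsTransInvPreorder r) : AddSubmonoid M where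
  carrier := {w | r 0 w}
  zero_mem' := hr.refl 0
  add_mem' {a b} ha hb := hr.2.1 _ _ _ hb (by simpa using hr.2.2 0 a b ha)

@[simp]
theorem mem_nonnegCone (hr : IsTransInvPreorder r) {w : M} : w ∈ hr.nonnegCone ↔ r 0 w :=
  Iff.rfl

theorem zero_le_nsmul_iff (hr : IsTransInvPreorder r) {k : ℕ} (hk : k ≠ 0) {w : M} :
    r 0 (k • w) ↔ r 0 w := by
  refine ⟨fun hkw => ?_, fun hw => hr.nonnegCone.nsmul_mem (hr.mem_nonnegCone.2 hw) k⟩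
  rcases hr.1 0 w with hw | hw
  · exact hw
  obtain ⟨m, rfl⟩ := Nat.exists_eq_succ_of_ne_zero hk
  -- `w = (m + 1) • w + m • (-w)` is a sum of two elements of the cone
  have hneg : r 0 (-w) := by simpa using hr.iff_zero_sub.1 hw
  have := hr.nonnegCone.add_mem (hr.mem_nonnegCone.2 hkw)
    (hr.nonnegCone.nsmul_mem (hr.mem_nonnegCone.2 hneg) m)
  simpa [succ_nsmul', neg_nsmul, add_assoc] using this

end AddGroup

section RatModule

variable {M : Type*} [AddCommGroup M] [Module ℚ M] {r : M → M → Prop}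

theorem zero_le_smul_iff (hr : IsTransInvPreorder r) {l : ℚ} (hl : 0 < l) (w : M) :
    r 0 (l • w) ↔ r 0 w := by
  have hnum : l.num.toNat ≠ 0 := by have := Rat.num_pos.2 hl; omega
  have key : l.den • (l • w) = l.num.toNat • w := by
    rw [← Nat.cast_smul_eq_nsmul ℚ, ← Nat.cast_smul_eq_nsmul ℚ, smul_smul, mul_comm,
      Rat.mul_den_eq_num, ← Int.cast_natCast, Int.toNat_of_nonneg (Rat.num_nonneg.2 hl.le)]
  rw [← hr.zero_le_nsmul_iff l.den_ne_zero, key, hr.zero_le_nsmul_iff hnum]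

theorem smul_iff (hr : IsTransInvPreorder r) {l : ℚ} (hl : 0 < l) (u v : M) :
    r (l • u) (l • v) ↔ r u v := by
  rw [hr.iff_zero_sub, ← smul_sub, hr.zero_le_smul_iff hl, ← hr.iff_zero_sub]

end RatModule

theorem le_comap {M α F : Type*} [AddGroup M] [AddCommGroup α] [LinearOrder α]
    [IsOrderedAddMonoid α] [FunLike F M α] [AddMonoidHomClass F M α] (f : F) :
    IsTransInvPreorder fun u v : M => f u ≤ f v :=
  ⟨fun _ _ => le_total _ _, fun _ _ _ => le_trans, fun _ _ w h => by simpa using h⟩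

end IsTransInvPreorder

def PreservesTransInvPreorders {M : Type*} [AddGroup M] (φ : M → M) : Prop :=
  ∀ r : M → M → Prop, IsTransInvPreorder r → ∀ u v, r (φ u) (φ v) ↔ r u v

namespace PreservesTransInvPreorders

variable {K V : Type*} [Field K] [LinearOrder K] [IsStrictOrderedRing K] [AddCommGroup V]
  [Module K V] {φ : V →ₗ[K] V}

theorem dual_apply_le_iff (hφ : PreservesTransInvPreorders φ) (f : Module.Dual K V) (u v : V) :
    f (φ u) ≤ f (φ v) ↔ f u ≤ f v :=
  hφ _ (IsTransInvPreorder.le_comap f) u v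

theorem dual_apply_eq_zero (hφ : PreservesTransInvPreorders φ) {f : Module.Dual K V} {u : V}
    (hu : f u = 0) : f (φ u) = 0 := by
  have h₁ := hφ.dual_apply_le_iff f u 0
  have h₂ := hφ.dual_apply_le_iff f 0 u
  simp only [map_zero, hu, le_refl, iff_true] at h₁ h₂
  exact le_antisymm h₁ h₂

theorem apply_mem_span_singleton (hφ : PreservesTransInvPreorders φ) (u : V) :
    φ u ∈ K ∙ u := by
  by_contra h
  obtain ⟨f, hfφ, hf⟩ := Submodule.exists_dual_map_eq_bot_of_notMem h inferInstance
  have hu : f u = 0 := by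
    simpa [hf] using Submodule.mem_map_of_mem (f := f) (Submodule.mem_span_singleton_self u)
  exact hfφ (hφ.dual_apply_eq_zero hu)

theorem exists_eq_smul_one (hφ : PreservesTransInvPreorders φ) : ∃ c : K, φ = c • 1 := by
  refine LinearMap.exists_eq_smul_id_of_forall_notLinearIndependent fun u hli => ?_
  obtain ⟨a, ha⟩ := Submodule.mem_span_singleton.1 (hφ.apply_mem_span_singleton u)
  exact (LinearIndependent.pair_iff' (hli.ne_zero 0)).1 hli a ha

theorem exists_pos_eq_smul (hφ : PreservesTransInvPreorders φ) :
    ∃ c : K, 0 < c ∧ ∀ x, φ x = c • x := by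
  obtain hV | hV := subsingleton_or_nontrivial V
  · exact ⟨1, one_pos, fun _ => Subsingleton.elim _ _⟩
  obtain ⟨c, rfl⟩ := hφ.exists_eq_smul_one
  refine ⟨c, ?_, fun _ => rfl⟩
  obtain ⟨u, hu⟩ := exists_ne (0 : V)
  obtain ⟨f, hf⟩ : ∃ f : Module.Dual K V, f u ≠ 0 := by
    by_contra! h
    exact hu ((Module.forall_dual_apply_eq_zero_iff K u).1 h)
  have h := hφ.dual_apply_le_iff ((f u)⁻¹ • f) u 0
  simp only [LinearMap.smul_apply, Module.End.one_apply, map_smul, map_zero, smul_eq_mul,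
    inv_mul_cancel₀ hf, mul_one] at h
  exact not_le.1 fun hc => zero_lt_one.not_ge (h.1 hc)

end PreservesTransInvPreorders

theorem preservesTransInvPreorders_iff {V : Type*} [AddCommGroup V] [Module ℚ V]
    (φ : V →ₗ[ℚ] V) :
    PreservesTransInvPreorders φ ↔ ∃ l : ℚ, 0 < l ∧ ∀ x, φ x = l • x := by
  refine ⟨PreservesTransInvPreorders.exists_pos_eq_smul, ?_⟩
  rintro ⟨l, hl, hφ⟩ r hr u v
  rw [hφ, hφ]
  exact hr.smul_iff hl u v

theorem stmt12_general (n : ℕ)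
    (φ : (Fin n → ℚ) ≃ₗ[ℚ] (Fin n → ℚ)) :
    (∀ r : (Fin n → ℚ) → (Fin n → ℚ) → Prop, IsTransInvPreorder r →
      ∀ u v : Fin n → ℚ, (r (φ u) (φ v) ↔ r u v)) ↔
    (∃ l : ℚ, 0 < l ∧ ∀ x : Fin n → ℚ, φ x = l • x) :=
  preservesTransInvPreorders_iff φ.toLinearMap

theorem stmt12 (n : ℕ) (hn : 1 ≤ n)
    (φ : (Fin n → ℚ) ≃ₗ[ℚ] (Fin n → ℚ)) :
    (∀ r : (Fin n → ℚ) → (Fin n → ℚ) → Prop, IsTransInvPreorder r →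
      ∀ u v : Fin n → ℚ, (r (φ u) (φ v) ↔ r u v)) ↔
    (∃ l : ℚ, 0 < l ∧ ∀ x : Fin n → ℚ, φ x = l • x) :=
  stmt12_general n φ
end

section
/- Let K be a field and endow the set of valuation subrings of K with the Inverse topology, generated by the sets U(x) = {A : ValuationSubring K | x ∈ m_A} for x ∈ K. Then for every valuation subring A of K, the closure of the singleton {A} in the Inverse topology equals the set {B : ValuationSubring K | A ≤ B} of all valuation subrings containing A. -/
/-- The maximal ideal of a valuation subring `A` of `K`, viewed as a subset of `K`:
the set of nonunits of `A`. -/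
def maxIdealSet {K : Type*} [Field K] (A : ValuationSubring K) : Set K :=
  {x : K | x ∈ A ∧ (x = 0 ∨ x⁻¹ ∉ A)}

/-- The Inverse topology on `ValuationSubring K`, generated by the sets
`U(x) = {A | x ∈ m_A}`. -/
def invTopV (K : Type*) [Field K] : TopologicalSpace (ValuationSubring K) :=
  TopologicalSpace.generateFrom
    {s : Set (ValuationSubring K) | ∃ x : K, s = {A | x ∈ maxIdealSet A}}

lemma maxIdealSet_anti {K : Type*} [Field K] {A B : ValuationSubring K} (h : A ≤ B)
    {x : K} (hx : x ∈ maxIdealSet B) : x ∈ maxIdealSet A := by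
  obtain ⟨hxB, h0 | hinv⟩ := hx
  · subst h0; exact ⟨zero_mem _, Or.inl rfl⟩
  · have hxA : x ∈ A := by
      rcases ValuationSubring.mem_or_inv_mem A x with h' | h'
      · exact h'
      · exact absurd (h h') hinv
    exact ⟨hxA, Or.inr fun hi => hinv (h hi)⟩

lemma open_mono {K : Type*} [Field K] {A B : ValuationSubring K} (h : A ≤ B)
    {o : Set (ValuationSubring K)}
    (ho : TopologicalSpace.GenerateOpen
      {s : Set (ValuationSubring K) | ∃ x : K, s = {A | x ∈ maxIdealSet A}} o)
    (hB : B ∈ o) : A ∈ o := by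
  induction ho with
  | basic s hs =>
      obtain ⟨x, rfl⟩ := hs
      exact maxIdealSet_anti h hB
  | univ => trivial
  | inter s t _ _ ihs iht => exact ⟨ihs hB.1, iht hB.2⟩
  | sUnion S _ ih =>
      obtain ⟨s, hs, hBs⟩ := hB
      exact ⟨s, hs, ih s hs hBs⟩

theorem stmt16 {K : Type*} [Field K] (A : ValuationSubring K) :
    @closure (ValuationSubring K) (invTopV K) {A} = {B : ValuationSubring K | A ≤ B} := by
  letI : TopologicalSpace (ValuationSubring K) := invTopV K
  ext B
  simp only [Set.mem_setOf_eq]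
  rw [mem_closure_iff]
  constructor
  · intro hB
    by_contra hAB
    simp only [SetLike.le_def, not_forall] at hAB
    obtain ⟨a, haA, haB⟩ := hAB
    have ha0 : a ≠ 0 := fun h => haB (h ▸ zero_mem B)
    have hopen : IsOpen {C : ValuationSubring K | a⁻¹ ∈ maxIdealSet C} :=
      TopologicalSpace.GenerateOpen.basic _ ⟨a⁻¹, rfl⟩
    have hBmem : B ∈ {C : ValuationSubring K | a⁻¹ ∈ maxIdealSet C} := by
      have hinv : a⁻¹ ∈ B := by
        rcases ValuationSubring.mem_or_inv_mem B a with h' | h'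
        · exact absurd h' haB
        · exact h'
      exact ⟨hinv, Or.inr (by rwa [inv_inv])⟩
    obtain ⟨C, hC, hCA⟩ := hB _ hopen hBmem
    rw [Set.mem_singleton_iff] at hCA
    subst hCA
    obtain ⟨_, h0 | hnm⟩ := hC
    · exact ha0 (by simpa using h0)
    · rw [inv_inv] at hnm
      exact hnm haA
  · intro hAB o ho hBo
    exact ⟨A, open_mono hAB ho hBo, rfl⟩
end

section
/- Let K be a countable field. Then there exists a metric d on the set of valuation subrings of K satisfying the ultrametric inequality d(x, z) ≤ max(d(x, y), d(y, z)) for all x, y, z, and whose induced topology coincides with the Patch topology. -/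
/-- The Patch topology on `ValuationSubring K`, generated by the sets
`O(x) = {A | x ∈ A}` and `U(x) = {A | x ∈ maxIdealSet A}`. -/
def patchTopV (K : Type*) [Field K] : TopologicalSpace (ValuationSubring K) :=
  TopologicalSpace.generateFrom
    ({s : Set (ValuationSubring K) | ∃ x : K, s = {A | x ∈ A}} ∪
      {s : Set (ValuationSubring K) | ∃ x : K, s = {A | x ∈ maxIdealSet A}})

open scoped Classical
open Topology

noncomputable section

variable {K : Type*} [Field K]

/-- Encoding of a valuation subring as an element of `ℕ → Bool × Bool`. -/
noncomputable def encFun [Encodable K] (A : ValuationSubring K) : ℕ → Bool × Bool :=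
  fun n => (Encodable.decode (α := K) n).elim (false, false) fun x =>
    (decide (x ∈ A), decide (x ∈ maxIdealSet A))

lemma encFun_encode [Encodable K] (A : ValuationSubring K) (x : K) :
    encFun A (Encodable.encode x) = (decide (x ∈ A), decide (x ∈ maxIdealSet A)) := by
  simp [encFun, Encodable.encodek]

lemma encFun_injective [Encodable K] : Function.Injective (encFun (K := K)) := by
  intro A B h
  ext x
  have h1 := congrFun h (Encodable.encode x)
  rw [encFun_encode, encFun_encode] at h1
  have h2 := congrArg Prod.fst h1
  simpa [decide_eq_decide] using h2

lemma compl_O (x : K) (hx : x ≠ 0) :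
    {A : ValuationSubring K | x ∈ A}ᶜ = {A | x⁻¹ ∈ maxIdealSet A} := by
  ext A
  simp only [Set.mem_compl_iff, Set.mem_setOf_eq, maxIdealSet, inv_inv, inv_eq_zero]
  constructor
  · intro h
    exact ⟨(A.mem_or_inv_mem x).resolve_left h, Or.inr h⟩
  · rintro ⟨h1, h2 | h2⟩
    · exact absurd h2 hx
    · exact h2

lemma compl_U (x : K) (hx : x ≠ 0) :
    {A : ValuationSubring K | x ∈ maxIdealSet A}ᶜ = {A | x⁻¹ ∈ A} := by
  ext A
  simp only [Set.mem_compl_iff, Set.mem_setOf_eq, maxIdealSet, hx, false_or]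
  constructor
  · intro h
    by_cases hxA : x ∈ A
    · by_contra h2
      exact h ⟨hxA, h2⟩
    · exact (A.mem_or_inv_mem x).resolve_left hxA
  · rintro h ⟨-, h2⟩
    exact h2 h

lemma isOpen_O (x : K) : IsOpen[patchTopV K] {A : ValuationSubring K | x ∈ A} :=
  TopologicalSpace.isOpen_generateFrom_of_mem (Or.inl ⟨x, rfl⟩)

lemma isOpen_U (x : K) : IsOpen[patchTopV K] {A : ValuationSubring K | x ∈ maxIdealSet A} :=
  TopologicalSpace.isOpen_generateFrom_of_mem (Or.inr ⟨x, rfl⟩)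

lemma isOpen_O_compl (x : K) : IsOpen[patchTopV K] {A : ValuationSubring K | x ∈ A}ᶜ := by
  by_cases hx : x = 0
  · subst hx
    have : {A : ValuationSubring K | (0 : K) ∈ A} = Set.univ :=
      Set.eq_univ_of_forall fun A => A.zero_mem
    rw [this, Set.compl_univ]
    exact @isOpen_empty _ (patchTopV K)
  · rw [compl_O x hx]
    exact isOpen_U x⁻¹

lemma isOpen_U_compl (x : K) :
    IsOpen[patchTopV K] {A : ValuationSubring K | x ∈ maxIdealSet A}ᶜ := by
  by_cases hx : x = 0
  · have : {A : ValuationSubring K | x ∈ maxIdealSet A} = Set.univ :=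
      Set.eq_univ_of_forall fun A => ⟨hx ▸ A.zero_mem, Or.inl hx⟩
    rw [this, Set.compl_univ]
    exact @isOpen_empty _ (patchTopV K)
  · rw [compl_U x hx]
    exact isOpen_O x⁻¹

lemma induced_eq [Encodable K] :
    TopologicalSpace.induced (encFun (K := K)) inferInstance = patchTopV K := by
  apply le_antisymm
  · rw [patchTopV, TopologicalSpace.le_generateFrom_iff_subset_isOpen]
    letI : TopologicalSpace (ValuationSubring K) :=
      TopologicalSpace.induced (encFun (K := K)) inferInstance
    rintro s (⟨x, rfl⟩ | ⟨x, rfl⟩)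
    · refine isOpen_induced_iff.2
        ⟨(fun f : ℕ → Bool × Bool => (f (Encodable.encode x)).1) ⁻¹' {true},
          (isOpen_discrete _).preimage ((continuous_apply (Encodable.encode x)).fst), ?_⟩
      ext A
      simp [encFun_encode]
    · refine isOpen_induced_iff.2
        ⟨(fun f : ℕ → Bool × Bool => (f (Encodable.encode x)).2) ⁻¹' {true},
          (isOpen_discrete _).preimage ((continuous_apply (Encodable.encode x)).snd), ?_⟩
      ext A
      simp [encFun_encode]
  · letI : TopologicalSpace (ValuationSubring K) := patchTopV K
    rw [← continuous_iff_le_induced]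
    refine continuous_pi fun n => ?_
    rcases hn : Encodable.decode (α := K) n with - | x
    · have : (fun A : ValuationSubring K => encFun A n) = fun _ => (false, false) := by
        funext A; simp [encFun, hn]
      rw [this]
      exact continuous_const
    · have : (fun A : ValuationSubring K => encFun A n) =
          fun A => (decide (x ∈ A), decide (x ∈ maxIdealSet A)) := by
        funext A; simp [encFun, hn]
      rw [this]
      refine Continuous.prodMk ?_ ?_
      · rw [continuous_discrete_rng]
        intro b
        cases b
        · have : (fun A : ValuationSubring K => decide (x ∈ A)) ⁻¹' {false} =
              {A : ValuationSubring K | x ∈ A}ᶜ := by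
            ext A; simp
          rw [this]; exact isOpen_O_compl x
        · have : (fun A : ValuationSubring K => decide (x ∈ A)) ⁻¹' {true} =
              {A : ValuationSubring K | x ∈ A} := by
            ext A; simp
          rw [this]; exact isOpen_O x
      · rw [continuous_discrete_rng]
        intro b
        cases b
        · have : (fun A : ValuationSubring K => decide (x ∈ maxIdealSet A)) ⁻¹' {false} =
              {A : ValuationSubring K | x ∈ maxIdealSet A}ᶜ := by
            ext A; simp
          rw [this]; exact isOpen_U_compl x
        · have : (fun A : ValuationSubring K => decide (x ∈ maxIdealSet A)) ⁻¹' {true} =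
              {A : ValuationSubring K | x ∈ maxIdealSet A} := by
            ext A; simp
          rw [this]; exact isOpen_U x

end

theorem stmt17 (K : Type*) [Field K] [Countable K] :
    ∃ m : MetricSpace (ValuationSubring K),
      (∀ x y z : ValuationSubring K, m.dist x z ≤ max (m.dist x y) (m.dist y z)) ∧
      m.toUniformSpace.toTopologicalSpace = patchTopV K := by
  haveI : Encodable K := Encodable.ofCountable K
  letI mT : MetricSpace (ℕ → Bool × Bool) := PiNat.metricSpace (E := fun _ => Bool × Bool)
  refine ⟨MetricSpace.induced encFun encFun_injective mT, ?_, ?_⟩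
  · intro x y z
    exact PiNat.dist_triangle_nonarch (encFun x) (encFun y) (encFun z)
  · show (UniformSpace.comap encFun mT.toUniformSpace).toTopologicalSpace = patchTopV K
    rw [UniformSpace.toTopologicalSpace_comap]
    exact induced_eq
end
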